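/- Let d ≥ 1, λ₁ ≠ 0, and let f : ℝ^d → ℝ be integrable with respect to the standard Gaussian measure γ_d. Then for ω ∼ γ_d, E_ω[R₁(f, ω)] = ∫_{ℝ^d} f dγ_d; consequently, for i.i.d. ω₁, …, ω_D ∼ γ_d, the stochastic rule R̄₁(f) = (1/D) Σ_{i=1}^D R₁(f, ω_i) is an unbiased estimator of ∫_{ℝ^d} f dγ_d, i.e., E[R̄₁(f)] = ∫_{ℝ^d} f dγ_d. -/

import Mathlib

open MeasureTheory ProbabilityTheory Real
open scoped RealInnerProductSpace

/-- The standard Gaussian measure `N(0, I_d)` on `ℝ^d`,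
the `d`-fold product of the standard normal distribution. -/
noncomputable def stdGaussian (d : ℕ) : Measure (EuclideanSpace ℝ (Fin d)) :=
  (Measure.pi fun _ : Fin d => gaussianReal 0 1).map (MeasurableEquiv.toLp 2 (Fin d → ℝ))

/-- The third-degree fully symmetric interpolatory rule with generator `l ≠ 0`:
`Q^{(1,d)}(f) = (1 - d/l²)·f(0) + (1/(2l²))·∑ᵢ [f(l eᵢ) + f(-l eᵢ)]`. -/
noncomputable def Q1 (d : ℕ) (l : ℝ) (f : EuclideanSpace ℝ (Fin d) → ℝ) : ℝ :=
  (1 - d / l ^ 2) * f 0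
    + (1 / (2 * l ^ 2)) * ∑ i : Fin d,
        (f (EuclideanSpace.single i l) + f (-EuclideanSpace.single i l))

/-- The randomized third-degree rule `M^{(1,d)}(f, ω)` with random weights
`ã₀(ω) = 1 - (∑ᵢ ωᵢ²)/l²` and `ã₁(ω) = (∑ᵢ ωᵢ²)/(2dl²)`. -/
noncomputable def M1 (d : ℕ) (l : ℝ) (f : EuclideanSpace ℝ (Fin d) → ℝ)
    (ω : EuclideanSpace ℝ (Fin d)) : ℝ :=
  (1 - (∑ i, ω i ^ 2) / l ^ 2) * f 0
    + ((∑ i, ω i ^ 2) / (2 * d * l ^ 2)) * ∑ i : Fin d,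
        (f (EuclideanSpace.single i l) + f (-EuclideanSpace.single i l))

/-- The single-sample stochastic rule `R₁(f, ω) = Q^{(1,d)}(f) + f(ω) - M^{(1,d)}(f, ω)`. -/
noncomputable def R1 (d : ℕ) (l : ℝ) (f : EuclideanSpace ℝ (Fin d) → ℝ)
    (ω : EuclideanSpace ℝ (Fin d)) : ℝ :=
  Q1 d l f + f ω - M1 d l f ω

/-!
`M^{(1,d)}(f, ω)` is affine in `‖ω‖² = ∑ ωᵢ²`, whose mean under `γ_d` is `d`; at `‖ω‖² = d` the
random weights are the deterministic weights of `Q^{(1,d)}`, so `E M^{(1,d)}(f, ·) = Q^{(1,d)}(f)`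
and the two correction terms of `R₁` cancel in expectation. The sample mean over i.i.d. draws
then has the same expectation, each coordinate of the product measure having law `γ_d`.
-/

lemma integral_sq_gaussianReal (m : ℝ) (v : NNReal) :
    ∫ x, x ^ 2 ∂gaussianReal m v = m ^ 2 + v := by
  have h := variance_eq_sub (memLp_id_gaussianReal (μ := m) (v := v) 2)
  simp only [variance_id_gaussianReal, Pi.pow_apply, id_eq, integral_id_gaussianReal] at h
  linarith

instance isProbabilityMeasure_stdGaussian (d : ℕ) : IsProbabilityMeasure (stdGaussian d) :=
  Measure.isProbabilityMeasure_map (by fun_prop)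

lemma integral_comp_apply_stdGaussian {d : ℕ} (i : Fin d) {g : ℝ → ℝ}
    (hg : AEStronglyMeasurable g (gaussianReal 0 1)) :
    ∫ ω, g (ω i) ∂stdGaussian d = ∫ x, g x ∂gaussianReal 0 1 := by
  rw [_root_.stdGaussian, integral_map_equiv]
  exact integral_comp_eval hg

lemma integrable_comp_apply_stdGaussian {d : ℕ} (i : Fin d) {g : ℝ → ℝ}
    (hg : Integrable g (gaussianReal 0 1)) :
    Integrable (fun ω : EuclideanSpace ℝ (Fin d) => g (ω i)) (stdGaussian d) := by
  rw [_root_.stdGaussian, integrable_map_equiv]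
  exact integrable_comp_eval hg

lemma integrable_apply_sq_stdGaussian {d : ℕ} (i : Fin d) :
    Integrable (fun ω : EuclideanSpace ℝ (Fin d) => ω i ^ 2) (stdGaussian d) :=
  integrable_comp_apply_stdGaussian (g := (· ^ 2)) i (memLp_id_gaussianReal 2).integrable_sq

lemma integrable_sum_sq_stdGaussian (d : ℕ) :
    Integrable (fun ω : EuclideanSpace ℝ (Fin d) => ∑ i, ω i ^ 2) (stdGaussian d) :=
  integrable_finsetSum _ fun i _ => integrable_apply_sq_stdGaussian i

lemma integral_sum_sq_stdGaussian (d : ℕ) :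
    ∫ ω, ∑ i, ω i ^ 2 ∂stdGaussian d = d := by
  rw [integral_finsetSum _ fun i _ => integrable_apply_sq_stdGaussian i]
  simp [integral_comp_apply_stdGaussian _ (continuous_pow 2).aestronglyMeasurable,
    integral_sq_gaussianReal]

lemma M1_eq_add_mul_sum_sq (d : ℕ) (l : ℝ) (f : EuclideanSpace ℝ (Fin d) → ℝ) :
    M1 d l f = fun ω => f 0 + ((∑ i : Fin d,
        (f (EuclideanSpace.single i l) + f (-EuclideanSpace.single i l))) / (2 * d * l ^ 2)
      - f 0 / l ^ 2) * ∑ i, ω i ^ 2 := by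
  ext ω
  rw [M1]
  ring

lemma integral_M1 (d : ℕ) (l : ℝ) (f : EuclideanSpace ℝ (Fin d) → ℝ) :
    ∫ ω, M1 d l f ω ∂stdGaussian d = Q1 d l f := by
  rw [M1_eq_add_mul_sum_sq, integral_add (integrable_const _)
    ((integrable_sum_sq_stdGaussian d).const_mul _), integral_const_mul,
    integral_const, probReal_univ, one_smul, integral_sum_sq_stdGaussian, Q1]
  rcases Nat.eq_zero_or_pos d with rfl | hd
  -- for `d = 0` the weight `1 / (2 d l²)` is junk, but the sum it multiplies is empty
  · simp
  · field_simp
    ring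

lemma integrable_M1 (d : ℕ) (l : ℝ) (f : EuclideanSpace ℝ (Fin d) → ℝ) :
    Integrable (M1 d l f) (stdGaussian d) := by
  rw [M1_eq_add_mul_sum_sq]
  exact (integrable_const _).add ((integrable_sum_sq_stdGaussian d).const_mul _)

lemma integrable_R1 {d : ℕ} (l : ℝ) {f : EuclideanSpace ℝ (Fin d) → ℝ}
    (hf : Integrable f (stdGaussian d)) : Integrable (R1 d l f) (stdGaussian d) :=
  ((integrable_const _).add hf).sub (integrable_M1 d l f)

lemma integral_R1 {d : ℕ} (l : ℝ) {f : EuclideanSpace ℝ (Fin d) → ℝ}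
    (hf : Integrable f (stdGaussian d)) :
    ∫ ω, R1 d l f ω ∂stdGaussian d = ∫ ω, f ω ∂stdGaussian d := by
  simp only [R1]
  rw [integral_sub (f := fun ω => Q1 d l f + f ω) ((integrable_const _).add hf)
      (integrable_M1 d l f),
    integral_add (integrable_const _) hf, integral_M1, integral_const, probReal_univ, one_smul]
  ring

lemma integral_sampleMean {Ω ι : Type*} [MeasurableSpace Ω] [Fintype ι] [Nonempty ι]
    (μ : Measure Ω) [IsProbabilityMeasure μ] {g : Ω → ℝ} (hg : Integrable g μ) :
    ∫ ωs, (1 / Fintype.card ι : ℝ) * ∑ i, g (ωs i) ∂Measure.pi (fun _ : ι => μ)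
      = ∫ ω, g ω ∂μ := by
  rw [integral_const_mul, integral_finsetSum _ fun i _ => integrable_comp_eval hg]
  have h (i : ι) : ∫ ωs, g (ωs i) ∂Measure.pi (fun _ : ι => μ) = ∫ ω, g ω ∂μ :=
    integral_comp_eval hg.aestronglyMeasurable
  simp [h]

theorem R1_unbiased_general (d D : ℕ) (hD : 1 ≤ D) (l : ℝ)
    (f : EuclideanSpace ℝ (Fin d) → ℝ) (hf : Integrable f (stdGaussian d)) :
    (∫ ω, R1 d l f ω ∂(stdGaussian d) = ∫ ω, f ω ∂(stdGaussian d)) ∧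
    (∫ ωs, (1 / D : ℝ) * ∑ i : Fin D, R1 d l f (ωs i)
        ∂(Measure.pi fun _ : Fin D => stdGaussian d)
      = ∫ ω, f ω ∂(stdGaussian d)) := by
  refine ⟨integral_R1 l hf, ?_⟩
  have : Nonempty (Fin D) := Fin.pos_iff_nonempty.mp hD
  simpa [integral_R1 l hf] using
    integral_sampleMean (ι := Fin D) (stdGaussian d) (integrable_R1 l hf)

/-- `E_ω[R₁(f, ω)] = ∫ f dγ_d`, and the stochastic rule
`R̄₁(f) = (1/D) ∑ᵢ R₁(f, ωᵢ)` over i.i.d. samples `ω₁, …, ω_D ∼ γ_d` is an unbiased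
estimator of `∫ f dγ_d`. -/
theorem R1_unbiased (d D : ℕ) (hd : 1 ≤ d) (hD : 1 ≤ D) (l : ℝ) (hl : l ≠ 0)
    (f : EuclideanSpace ℝ (Fin d) → ℝ) (hf : Integrable f (stdGaussian d)) :
    (∫ ω, R1 d l f ω ∂(stdGaussian d) = ∫ ω, f ω ∂(stdGaussian d)) ∧
    (∫ ωs, (1 / D : ℝ) * ∑ i : Fin D, R1 d l f (ωs i)
        ∂(Measure.pi fun _ : Fin D => stdGaussian d)
      = ∫ ω, f ω ∂(stdGaussian d)) :=
  R1_unbiased_general d D hD l f hf
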